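/- Let d ≥ 1, let ε = exp(2πi/d), let S ∈ M(d,ℂ) be the cyclic shift matrix (S e_l = e_{l+1 mod d} on the standard basis), and for k = 0,…,d−1 let u_k ∈ ℂ^d be the normalized vector with components (u_k)_l = (1/√d)·conj(ε)^{kl}. Let A = (a_{ij}) ∈ M(d,ℂ) and let T ∈ M(d²,ℂ) be the block matrix with blocks T_{ij} = a_{ij} S^{i−j} for i,j = 0,…,d−1 (where S^{i−j} means (S†)^{j−i} when j > i). Then T is separable if and only if T is positive semidefinite, and this holds if and only if all d matrices A ∘ u_k u_k†, k = 0,…,d−1, are positive semidefinite. -/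

import Mathlib

open Matrix Kronecker
open scoped ComplexOrder

/-- The primitive `d`-th root of unity `ε = exp(2πi/d)`. -/
noncomputable def epsRoot (d : ℕ) : ℂ := Complex.exp (2 * Real.pi * Complex.I / d)

/-- The cyclic shift matrix `S ∈ M(d,ℂ)`, `S e_l = e_{l+1 mod d}`. -/
def shiftS (d : ℕ) : Matrix (Fin d) (Fin d) ℂ :=
  Matrix.of fun i j : Fin d => if (i : ℕ) = ((j : ℕ) + 1) % d then 1 else 0

/-- The normalized eigenvector `u_k` of `S`, `(u_k)_l = (1/√d)·(conj ε)^{kl}`. -/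
noncomputable def uVec (d : ℕ) (k : Fin d) : Fin d → ℂ :=
  fun l => (Real.sqrt d : ℂ)⁻¹ * (starRingEnd ℂ (epsRoot d)) ^ ((k : ℕ) * (l : ℕ))

/-- A matrix in `M(d²,ℂ)` is separable if it is a finite sum of Kronecker
products of positive semidefinite matrices. -/
def MatSeparable {d : ℕ} (T : Matrix (Fin d × Fin d) (Fin d × Fin d) ℂ) : Prop :=
  ∃ (s : ℕ) (P : Fin s → Matrix (Fin d) (Fin d) ℂ)
    (Q : Fin s → Matrix (Fin d) (Fin d) ℂ),
      (∀ i, (P i).PosSemidef) ∧ (∀ i, (Q i).PosSemidef) ∧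
        T = ∑ i : Fin s, (P i) ⊗ₖ (Q i)

/-!
With `P_k = u_k u_kᴴ`, orthogonality of the characters `m ↦ ε^(k m)` of `ℤ/d` gives
`∑_k P_k(i,j) P_k(q,p) = [p + j = q + i] / d`, which is exactly the support pattern of the blocks
`S^(i-j)`. Hence `T = ∑_k d (A ∘ P_k) ⊗ P_kᵀ`, a separable decomposition as soon as every
`A ∘ P_k` is positive semidefinite. Conversely `A` is the principal submatrix of `T` on the
indices `(i, i)`, so `T ⪰ 0` forces `A ⪰ 0` and then `A ∘ P_k ⪰ 0` by the Schur product
theorem; and separable matrices are positive semidefinite.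
-/
theorem geom_sum_eq_ite_of_pow_eq_one {K : Type*} [DivisionRing K] [DecidableEq K] {z : K}
    {n : ℕ} (h : z ^ n = 1) : ∑ i ∈ Finset.range n, z ^ i = if z = 1 then (n : K) else 0 := by
  split_ifs with hz
  · simp [hz]
  · rw [geom_sum_eq hz, h, sub_self, zero_div]

section
variable {d : ℕ} [NeZero d]

theorem isPrimitiveRoot_epsRoot : IsPrimitiveRoot (epsRoot d) d :=
  Complex.isPrimitiveRoot_exp d (NeZero.ne d)

theorem epsRoot_pow_eq_pow_iff {a b : ℕ} : epsRoot d ^ a = epsRoot d ^ b ↔ a ≡ b [MOD d] := by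
  rw [(isPrimitiveRoot_epsRoot.isOfFinOrder (NeZero.ne d)).pow_eq_pow_iff_modEq,
    ← isPrimitiveRoot_epsRoot.eq_orderOf]

theorem conj_epsRoot : starRingEnd ℂ (epsRoot d) = (epsRoot d)⁻¹ :=
  (Complex.inv_eq_conj (isPrimitiveRoot_epsRoot.norm'_eq_one (NeZero.ne d))).symm

theorem sum_range_epsRoot_div_pow (a b : ℕ) :
    ∑ k ∈ Finset.range d, (epsRoot d ^ a / epsRoot d ^ b) ^ k
      = if a ≡ b [MOD d] then (d : ℂ) else 0 := by
  have hε : IsPrimitiveRoot (epsRoot d) d := isPrimitiveRoot_epsRoot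
  have hpow : ∀ n : ℕ, (epsRoot d ^ n) ^ d = 1 := fun n ↦ by
    rw [pow_right_comm, hε.pow_eq_one, one_pow]
  rw [geom_sum_eq_ite_of_pow_eq_one (by rw [div_pow, hpow, hpow, div_one])]
  simp only [div_eq_one_iff_eq (pow_ne_zero _ (hε.ne_zero (NeZero.ne d))), epsRoot_pow_eq_pow_iff]

theorem vecMulVec_uVec_apply (k i j : Fin d) :
    vecMulVec (uVec d k) (star (uVec d k)) i j
      = (d : ℂ)⁻¹ * (epsRoot d ^ (j : ℕ) / epsRoot d ^ (i : ℕ)) ^ (k : ℕ) := by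
  have hsqrt : (Real.sqrt d : ℂ) * Real.sqrt d = d := by
    rw [← Complex.ofReal_mul, Real.mul_self_sqrt (Nat.cast_nonneg d), Complex.ofReal_natCast]
  simp only [vecMulVec_apply, Pi.star_apply, uVec, star_mul', RCLike.star_def, map_pow, map_inv₀,
    Complex.conj_ofReal, conj_epsRoot, inv_inv]
  rw [div_pow, ← hsqrt]
  ring

theorem sum_vecMulVec_uVec_mul (i j p q : Fin d) :
    ∑ k, vecMulVec (uVec d k) (star (uVec d k)) i j *
        vecMulVec (uVec d k) (star (uVec d k)) q p
      = (d : ℂ)⁻¹ * if p + j = q + i then 1 else 0 := by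
  have hmodEq : (j + p : ℕ) ≡ i + q [MOD d] ↔ p + j = q + i := by
    rw [add_comm p, add_comm q, Fin.ext_iff, Fin.val_add, Fin.val_add]
    rfl
  calc _ = (d : ℂ)⁻¹ * (d : ℂ)⁻¹ *
        ∑ k ∈ Finset.range d, (epsRoot d ^ (j + p : ℕ) / epsRoot d ^ (i + q : ℕ)) ^ k := by
        rw [Finset.mul_sum, ← Fin.sum_univ_eq_sum_range]
        refine Finset.sum_congr rfl fun k _ ↦ ?_
        rw [vecMulVec_uVec_apply, vecMulVec_uVec_apply, pow_add, pow_add, ← div_mul_div_comm,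
          mul_pow]
        ring
    _ = (d : ℂ)⁻¹ * if p + j = q + i then 1 else 0 := by
        simp only [sum_range_epsRoot_div_pow, hmodEq]
        split_ifs
        · field_simp
        · ring

open Fin.CommRing in
theorem shiftS_apply (p q : Fin d) : shiftS d p q = if p = q + 1 then 1 else 0 := by
  simp [shiftS, Fin.ext_iff, Fin.val_add]

open Fin.CommRing in
theorem shiftS_pow_apply (n : ℕ) (p q : Fin d) :
    (shiftS d ^ n) p q = if p = q + n then 1 else 0 := by
  induction n generalizing q with
  | zero => simp [one_apply]
  | succ n ih =>
    simp only [pow_succ, mul_apply, shiftS_apply, mul_ite, mul_one, mul_zero,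
      Finset.sum_ite_eq', Finset.mem_univ, if_true, ih, Nat.cast_succ, add_right_comm q 1,
      add_assoc]

variable (d) in
def shiftPowSub (i j : Fin d) : Matrix (Fin d) (Fin d) ℂ :=
  if (j : ℕ) ≤ (i : ℕ) then shiftS d ^ ((i : ℕ) - (j : ℕ))
  else (shiftS d)ᴴ ^ ((j : ℕ) - (i : ℕ))

open Fin.CommRing in
theorem shiftPowSub_apply (i j p q : Fin d) :
    shiftPowSub d i j p q = if p + j = q + i then 1 else 0 := by
  by_cases hji : (j : ℕ) ≤ (i : ℕ)
  · simp only [shiftPowSub, if_pos hji, shiftS_pow_apply, Nat.cast_sub hji, Fin.cast_val_eq_self,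
      ← add_sub_assoc, eq_sub_iff_add_eq]
  · rw [shiftPowSub, if_neg hji, ← conjTranspose_pow, conjTranspose_apply, shiftS_pow_apply,
      apply_ite star, star_one, star_zero]
    simp only [Nat.cast_sub (le_of_not_ge hji), Fin.cast_val_eq_self, ← add_sub_assoc,
      eq_sub_iff_add_eq, eq_comm]

variable (d) in
noncomputable def circulantBlock (A : Matrix (Fin d) (Fin d) ℂ) :
    Matrix (Fin d × Fin d) (Fin d × Fin d) ℂ :=
  ∑ i, ∑ j, single i j 1 ⊗ₖ (A i j • shiftPowSub d i j)

theorem circulantBlock_apply (A : Matrix (Fin d) (Fin d) ℂ) (i p j q : Fin d) :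
    circulantBlock d A (i, p) (j, q) = if p + j = q + i then A i j else 0 := by
  simp only [circulantBlock, Matrix.sum_apply, kroneckerMap_apply, Matrix.smul_apply,
    shiftPowSub_apply, single_apply, smul_eq_mul]
  rw [Fintype.sum_eq_single i fun x hx ↦ by simp [hx],
    Fintype.sum_eq_single j fun c hc ↦ by simp [hc]]
  simp

theorem submatrix_diag_circulantBlock (A : Matrix (Fin d) (Fin d) ℂ) :
    (circulantBlock d A).submatrix (fun i ↦ (i, i)) (fun i ↦ (i, i)) = A := by
  ext i j
  simp [circulantBlock_apply, add_comm]

theorem circulantBlock_eq_sum_kronecker (A : Matrix (Fin d) (Fin d) ℂ) :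
    circulantBlock d A = ∑ k : Fin d,
      ((d : ℂ) • (A ⊙ vecMulVec (uVec d k) (star (uVec d k)))) ⊗ₖ
        (vecMulVec (uVec d k) (star (uVec d k)))ᵀ := by
  ext ⟨i, p⟩ ⟨j, q⟩
  have hd : (d : ℂ) ≠ 0 := Nat.cast_ne_zero.mpr (NeZero.ne d)
  calc circulantBlock d A (i, p) (j, q)
      = (d : ℂ) * A i j * ((d : ℂ)⁻¹ * if p + j = q + i then 1 else 0) := by
        rw [circulantBlock_apply]
        split_ifs
        · field_simp
        · ring
    _ = _ := by
        rw [← sum_vecMulVec_uVec_mul, Finset.mul_sum, Matrix.sum_apply]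
        refine Finset.sum_congr rfl fun k _ ↦ ?_
        simp only [kroneckerMap_apply, Matrix.smul_apply, hadamard_apply, transpose_apply,
          smul_eq_mul]
        ring

theorem posSemidef_of_posSemidef_circulantBlock {A : Matrix (Fin d) (Fin d) ℂ}
    (h : (circulantBlock d A).PosSemidef) : A.PosSemidef := by
  simpa only [submatrix_diag_circulantBlock] using h.submatrix fun i ↦ (i, i)

theorem matSeparable_circulantBlock {A : Matrix (Fin d) (Fin d) ℂ}
    (h : ∀ k, (A ⊙ vecMulVec (uVec d k) (star (uVec d k))).PosSemidef) :
    MatSeparable (circulantBlock d A) :=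
  ⟨d, _, _, fun k ↦ (h k).smul (Nat.cast_nonneg d),
    fun _ ↦ (posSemidef_vecMulVec_self_star _).transpose, circulantBlock_eq_sum_kronecker A⟩

end

theorem MatSeparable.posSemidef {d : ℕ} {T : Matrix (Fin d × Fin d) (Fin d × Fin d) ℂ}
    (h : MatSeparable T) : T.PosSemidef := by
  obtain ⟨s, P, Q, hP, hQ, rfl⟩ := h
  exact posSemidef_sum _ fun i _ ↦ (hP i).kronecker (hQ i)

/-- the circulant-type block matrix with blocks `a_{ij} S^{i-j}`
is separable iff it is positive semidefinite, iff all `d` matrices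
`A ∘ u_k u_k†` are positive semidefinite. -/
theorem circulant_block_separable_iff {d : ℕ} (hd : 1 ≤ d)
    (A : Matrix (Fin d) (Fin d) ℂ) :
    (MatSeparable (∑ i : Fin d, ∑ j : Fin d,
        (Matrix.single i j (1 : ℂ)) ⊗ₖ
          (A i j •
            (if (j : ℕ) ≤ (i : ℕ) then (shiftS d) ^ ((i : ℕ) - (j : ℕ))
             else ((shiftS d)ᴴ) ^ ((j : ℕ) - (i : ℕ)))))
      ↔ (∑ i : Fin d, ∑ j : Fin d,
          (Matrix.single i j (1 : ℂ)) ⊗ₖ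
            (A i j •
              (if (j : ℕ) ≤ (i : ℕ) then (shiftS d) ^ ((i : ℕ) - (j : ℕ))
               else ((shiftS d)ᴴ) ^ ((j : ℕ) - (i : ℕ))))).PosSemidef) ∧
    ((∑ i : Fin d, ∑ j : Fin d,
        (Matrix.single i j (1 : ℂ)) ⊗ₖ
          (A i j •
            (if (j : ℕ) ≤ (i : ℕ) then (shiftS d) ^ ((i : ℕ) - (j : ℕ))
             else ((shiftS d)ᴴ) ^ ((j : ℕ) - (i : ℕ))))).PosSemidef
      ↔ ∀ k : Fin d,
          (Matrix.hadamard A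
            (Matrix.vecMulVec (uVec d k) (star (uVec d k)))).PosSemidef) := by
  have : NeZero d := ⟨by omega⟩
  change (MatSeparable (circulantBlock d A) ↔ (circulantBlock d A).PosSemidef) ∧
    ((circulantBlock d A).PosSemidef ↔
      ∀ k, (A ⊙ vecMulVec (uVec d k) (star (uVec d k))).PosSemidef)
  have hadamard_of_posSemidef (h : (circulantBlock d A).PosSemidef) (k : Fin d) :
      (A ⊙ vecMulVec (uVec d k) (star (uVec d k))).PosSemidef :=
    (posSemidef_of_posSemidef_circulantBlock h).hadamard (posSemidef_vecMulVec_self_star _)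
  exact ⟨⟨MatSeparable.posSemidef,
      fun h ↦ matSeparable_circulantBlock (hadamard_of_posSemidef h)⟩,
    ⟨hadamard_of_posSemidef, fun h ↦ (matSeparable_circulantBlock h).posSemidef⟩⟩
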